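/- arXiv:1511.08290 — 3 statements merged into one kernel-verified Lean document; each statement's English description precedes it below -/
import Mathlib

section
/- Using the Q-function bound Q(x) ≤ (1/12) e^{-x²/2} + (1/4) e^{-2x²/3} for x ≥ 0, the expected error probability c·E[Q(sqrt(g χ/N₀)) · 1{χ ≥ τ}] over an exponential χ with density (1/(2σ²))e^{-x/(2σ²)} is bounded above by (c/12)(ρ/σ)² exp(-τ/(2ρ²)) + (c/4)(ρ₁/σ)² exp(-τ/(2ρ₁²)), where ρ = sqrt(σ²N₀/(gσ²+N₀)), g₁ = 4g/3, ρ₁ = sqrt(σ²N₀/(g₁σ²+N₀)). -/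
open MeasureTheory Real Set

/-!
Write `γ = g χ / N₀` for the SNR. The Q-function bound turns `Q(√γ)` into a sum of two Chernoff
terms `e^{-γ/2}` and `e^{-2γ/3} = e^{-g₁χ/(2N₀)}`. Against the exponential density each Chernoff
term `e^{-Gχ/(2N₀)}` merges into a single exponential of rate `1/(2ρ²)` with
`ρ² = σ²N₀/(Gσ² + N₀)`, whose tail integral over `(τ, ∞)` is `(ρ/σ)² e^{-τ/(2ρ²)}`.
-/

section ChernoffTerm

variable {σ G N₀ ρ : ℝ}

lemma exp_neg_half_snr_mul_density_eq (hσ : 0 < σ) (hN : 0 < N₀)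
    (hρ : ρ ^ 2 = σ ^ 2 * N₀ / (G * σ ^ 2 + N₀)) (x : ℝ) :
    exp (-(G * x / N₀) / 2) * (1 / (2 * σ ^ 2) * exp (-x / (2 * σ ^ 2)))
      = 1 / (2 * σ ^ 2) * exp (-(1 / (2 * ρ ^ 2)) * x) := by
  rw [mul_left_comm, ← exp_add, hρ]
  congr 2
  field_simp
  ring

lemma integrableOn_exp_neg_half_snr_mul_density (hσ : 0 < σ) (hG : 0 ≤ G) (hN : 0 < N₀)
    (hρ : ρ ^ 2 = σ ^ 2 * N₀ / (G * σ ^ 2 + N₀)) (τ : ℝ) :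
    IntegrableOn (fun x ↦ exp (-(G * x / N₀) / 2) * (1 / (2 * σ ^ 2) * exp (-x / (2 * σ ^ 2))))
      (Ioi τ) := by
  have hρ_pos : 0 < ρ ^ 2 := by rw [hρ]; positivity
  simp_rw [exp_neg_half_snr_mul_density_eq hσ hN hρ]
  exact (integrableOn_exp_mul_Ioi (neg_lt_zero.2 (by positivity)) τ).const_mul _

lemma setIntegral_exp_neg_half_snr_mul_density (hσ : 0 < σ) (hG : 0 ≤ G) (hN : 0 < N₀)
    (hρ : ρ ^ 2 = σ ^ 2 * N₀ / (G * σ ^ 2 + N₀)) (τ : ℝ) :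
    ∫ x in Ioi τ, exp (-(G * x / N₀) / 2) * (1 / (2 * σ ^ 2) * exp (-x / (2 * σ ^ 2)))
      = (ρ / σ) ^ 2 * exp (-τ / (2 * ρ ^ 2)) := by
  have hρ_pos : 0 < ρ ^ 2 := by rw [hρ]; positivity
  simp_rw [exp_neg_half_snr_mul_density_eq hσ hN hρ]
  rw [integral_const_mul, integral_exp_mul_Ioi (neg_lt_zero.2 (by positivity))]
  field_simp

end ChernoffTerm

lemma Q_sqrt_snr_le {Q : ℝ → ℝ}
    (hQbound : ∀ x, 0 ≤ x → Q x ≤ 1 / 12 * exp (-x ^ 2 / 2) + 1 / 4 * exp (-2 * x ^ 2 / 3))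
    {g x N₀ : ℝ} (hsnr : 0 ≤ g * x / N₀) :
    Q (√(g * x / N₀))
      ≤ 1 / 12 * exp (-(g * x / N₀) / 2) + 1 / 4 * exp (-(4 * g / 3 * x / N₀) / 2) := by
  have h := hQbound _ (sqrt_nonneg (g * x / N₀))
  rw [sq_sqrt hsnr] at h
  convert h using 4
  ring

theorem ber_tail_term_bound_general (σ c g N₀ τ : ℝ) (hσ : 0 < σ) (hc : 0 < c) (hg : 0 < g)
    (hN : 0 < N₀) (hτ : 0 ≤ τ)
    (Q : ℝ → ℝ) (hQnonneg : ∀ x, 0 ≤ Q x)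
    (hQbound : ∀ x, 0 ≤ x → Q x ≤ (1/12) * Real.exp (-x^2 / 2) + (1/4) * Real.exp (-2 * x^2 / 3))
    (g₁ ρ ρ₁ : ℝ) (hg₁ : g₁ = 4 * g / 3)
    (hρ : ρ = Real.sqrt (σ^2 * N₀ / (g * σ^2 + N₀)))
    (hρ₁ : ρ₁ = Real.sqrt (σ^2 * N₀ / (g₁ * σ^2 + N₀))) :
    c * ∫ x in Set.Ioi τ,
        Q (Real.sqrt (g * x / N₀)) * ((1 / (2 * σ^2)) * Real.exp (-x / (2 * σ^2)))
      ≤ (c/12) * (ρ/σ)^2 * Real.exp (-τ / (2 * ρ^2))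
        + (c/4) * (ρ₁/σ)^2 * Real.exp (-τ / (2 * ρ₁^2)) := by
  subst hg₁
  have hρ_sq : ρ ^ 2 = σ ^ 2 * N₀ / (g * σ ^ 2 + N₀) := by rw [hρ, sq_sqrt (by positivity)]
  have hρ₁_sq : ρ₁ ^ 2 = σ ^ 2 * N₀ / (4 * g / 3 * σ ^ 2 + N₀) := by
    rw [hρ₁, sq_sqrt (by positivity)]
  set density : ℝ → ℝ := fun x ↦ 1 / (2 * σ ^ 2) * exp (-x / (2 * σ ^ 2))
  set chernoff : ℝ → ℝ → ℝ := fun G x ↦ exp (-(G * x / N₀) / 2) * density x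
  have hint_g := integrableOn_exp_neg_half_snr_mul_density hσ hg.le hN hρ_sq τ
  have hint_g₁ := integrableOn_exp_neg_half_snr_mul_density hσ (by positivity) hN hρ₁_sq τ
  have hQ_le : ∀ᵐ x ∂volume.restrict (Ioi τ),
      Q (√(g * x / N₀)) * density x
        ≤ 1 / 12 * chernoff g x + 1 / 4 * chernoff (4 * g / 3) x := by
    filter_upwards [ae_restrict_mem measurableSet_Ioi] with x (hx : τ < x)
    have hsnr : 0 ≤ g * x / N₀ := by have := hτ.trans hx.le; positivity
    calc Q (√(g * x / N₀)) * density x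
        ≤ (1 / 12 * exp (-(g * x / N₀) / 2) + 1 / 4 * exp (-(4 * g / 3 * x / N₀) / 2))
            * density x := mul_le_mul_of_nonneg_right (Q_sqrt_snr_le hQbound hsnr) (by positivity)
      _ = _ := by ring
  have hQ_nonneg : 0 ≤ᵐ[volume.restrict (Ioi τ)] fun x ↦ Q (√(g * x / N₀)) * density x :=
    ae_of_all _ fun x ↦ mul_nonneg (hQnonneg _) (by positivity)
  calc c * ∫ x in Ioi τ, Q (√(g * x / N₀)) * density x
      ≤ c * ∫ x in Ioi τ, (1 / 12 * chernoff g x + 1 / 4 * chernoff (4 * g / 3) x) :=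
        mul_le_mul_of_nonneg_left (integral_mono_of_nonneg hQ_nonneg
          ((hint_g.const_mul _).add (hint_g₁.const_mul _)) hQ_le) hc.le
    _ = _ := by
        rw [integral_add (hint_g.const_mul _) (hint_g₁.const_mul _), integral_const_mul,
          integral_const_mul, setIntegral_exp_neg_half_snr_mul_density hσ hg.le hN hρ_sq,
          setIntegral_exp_neg_half_snr_mul_density hσ (by positivity) hN hρ₁_sq]
        ring

/-- Using the bound `Q x ≤ (1/12) e^{-x²/2} + (1/4) e^{-2x²/3}` for `x ≥ 0`,
the error term `c · E[Q(√(gχ/N₀)) · 1{χ ≥ τ}]` over an exponential `χ` with density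
`(1/(2σ²)) e^{-x/(2σ²)}` is bounded by
`(c/12)(ρ/σ)² e^{-τ/(2ρ²)} + (c/4)(ρ₁/σ)² e^{-τ/(2ρ₁²)}`. -/
theorem ber_tail_term_bound (σ c g N₀ τ : ℝ) (hσ : 0 < σ) (hc : 0 < c) (hg : 0 < g)
    (hN : 0 < N₀) (hτ : 0 ≤ τ)
    (Q : ℝ → ℝ) (hQmeas : Measurable Q) (hQnonneg : ∀ x, 0 ≤ Q x)
    (hQbound : ∀ x, 0 ≤ x → Q x ≤ (1/12) * Real.exp (-x^2 / 2) + (1/4) * Real.exp (-2 * x^2 / 3))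
    (g₁ ρ ρ₁ : ℝ) (hg₁ : g₁ = 4 * g / 3)
    (hρ : ρ = Real.sqrt (σ^2 * N₀ / (g * σ^2 + N₀)))
    (hρ₁ : ρ₁ = Real.sqrt (σ^2 * N₀ / (g₁ * σ^2 + N₀))) :
    c * ∫ x in Set.Ioi τ,
        Q (Real.sqrt (g * x / N₀)) * ((1 / (2 * σ^2)) * Real.exp (-x / (2 * σ^2)))
      ≤ (c/12) * (ρ/σ)^2 * Real.exp (-τ / (2 * ρ^2))
        + (c/4) * (ρ₁/σ)^2 * Real.exp (-τ / (2 * ρ₁^2)) :=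
  ber_tail_term_bound_general σ c g N₀ τ hσ hc hg hN hτ Q hQnonneg hQbound g₁ ρ ρ₁ hg₁ hρ hρ₁
end

section
/- For the first round of the CCSR scheme, the BER satisfies P_{e1} ≤ (c/12)(ρ/σ)² e^{-τ/(2ρ²)} + (c/4)(ρ₁/σ)² e^{-τ/(2ρ₁²)} + (c/12)(ρ/σ)⁴(1 - e^{-τ/(2ρ²)}) + (c/4)(ρ₁/σ)⁴(1 - e^{-τ/(2ρ₁²)}), where P_{e1} = c·E[1{χ₁≥τ} Q(sqrt(gχ₁/N₀)) + 1{χ₁<τ} Q(sqrt(g(χ₁+χ₂)/N₀))] with χ₁, χ₂ i.i.d. exponential of density (1/(2σ²))e^{-x/(2σ²)}. -/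
open MeasureTheory Real Set

/-!
Bound `Q(√(g u / N₀))` by the two-exponential mixture `e^{-βu}/12 + e^{-β₁u}/4`, where
`β = g/(2N₀)` and `β₁ = g₁/(2N₀)`. Against the exponential density `r e^{-ru}`, `r = 1/(2σ²)`,
each exponential merges into `r e^{-(β + r)u}`, so both the tail integral over `χ₁ > τ` and
the double integral over `χ₁ ≤ τ` are explicit; `1/ρ² = 2(β + r)` turns the result into the
stated bound.
-/

theorem integral_exp_neg_mul_Ioi {a : ℝ} (ha : 0 < a) (t : ℝ) :
    ∫ x in Ioi t, exp (-a * x) = exp (-a * t) / a := by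
  rw [integral_exp_mul_Ioi (neg_lt_zero.2 ha), div_neg, neg_div, neg_neg]

theorem integral_exp_neg_mul_Ioc {a τ : ℝ} (ha : 0 < a) (hτ : 0 ≤ τ) :
    ∫ x in Ioc 0 τ, exp (-a * x) = (1 - exp (-a * τ)) / a := by
  have hsplit := setIntegral_union (Ioc_disjoint_Ioi le_rfl) measurableSet_Ioi
    ((exp_neg_integrableOn_Ioi 0 ha).mono_set Ioc_subset_Ioi_self) (exp_neg_integrableOn_Ioi τ ha)
  rw [Ioc_union_Ioi_eq_Ioi hτ, integral_exp_neg_mul_Ioi ha, integral_exp_neg_mul_Ioi ha,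
    mul_zero, exp_zero] at hsplit
  rw [sub_div]
  linarith

section ExponentialMixture

variable {r β β₁ A B : ℝ}

theorem expMix_mul_expDensity (x : ℝ) :
    (A * exp (-β * x) + B * exp (-β₁ * x)) * (r * exp (-r * x)) =
      A * r * exp (-(β + r) * x) + B * r * exp (-(β₁ + r) * x) := by
  simp only [neg_add, add_mul, exp_add]
  ring

theorem setIntegral_expMix_mul_expDensity (hβ : 0 < β + r) (hβ₁ : 0 < β₁ + r) {s : Set ℝ}
    {t : ℝ} (hs : s ⊆ Ioi t) :
    ∫ x in s, (A * exp (-β * x) + B * exp (-β₁ * x)) * (r * exp (-r * x)) =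
      A * r * (∫ x in s, exp (-(β + r) * x)) + B * r * ∫ x in s, exp (-(β₁ + r) * x) := by
  simp only [expMix_mul_expDensity]
  rw [integral_add, integral_const_mul, integral_const_mul]
  · exact ((exp_neg_integrableOn_Ioi t hβ).mono_set hs).const_mul _
  · exact ((exp_neg_integrableOn_Ioi t hβ₁).mono_set hs).const_mul _

theorem integrableOn_expMix_mul_expDensity (hβ : 0 < β + r) (hβ₁ : 0 < β₁ + r) (t : ℝ) :
    IntegrableOn (fun x => (A * exp (-β * x) + B * exp (-β₁ * x)) * (r * exp (-r * x)))
      (Ioi t) := by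
  simp only [expMix_mul_expDensity]
  exact ((exp_neg_integrableOn_Ioi t hβ).const_mul _).add
    ((exp_neg_integrableOn_Ioi t hβ₁).const_mul _)

variable {φ : ℝ → ℝ}

theorem setIntegral_Ioi_mul_expDensity_le (hr : 0 ≤ r) (hβ : 0 < β + r) (hβ₁ : 0 < β₁ + r)
    {t : ℝ} (ht : 0 ≤ t) (hφ₀ : ∀ u, 0 ≤ u → 0 ≤ φ u)
    (hφ : ∀ u, 0 ≤ u → φ u ≤ A * exp (-β * u) + B * exp (-β₁ * u)) :
    ∫ x in Ioi t, φ x * (r * exp (-r * x)) ≤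
      A * (r / (β + r)) * exp (-(β + r) * t) + B * (r / (β₁ + r)) * exp (-(β₁ + r) * t) := by
  calc ∫ x in Ioi t, φ x * (r * exp (-r * x))
      ≤ ∫ x in Ioi t, (A * exp (-β * x) + B * exp (-β₁ * x)) * (r * exp (-r * x)) := by
        refine setIntegral_mono_of_nonneg (fun x hx => ?_) (fun x hx => ?_)
          (integrableOn_expMix_mul_expDensity hβ hβ₁ t)
        · exact mul_nonneg (hφ₀ x (ht.trans hx.le)) (by positivity)
        · exact mul_le_mul_of_nonneg_right (hφ x (ht.trans hx.le)) (by positivity)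
    _ = _ := by
        rw [setIntegral_expMix_mul_expDensity hβ hβ₁ subset_rfl, integral_exp_neg_mul_Ioi hβ,
          integral_exp_neg_mul_Ioi hβ₁]
        ring

theorem setIntegral_Ioi_add_mul_expDensity_le (hr : 0 ≤ r) (hβ : 0 < β + r)
    (hβ₁ : 0 < β₁ + r) (hφ₀ : ∀ u, 0 ≤ u → 0 ≤ φ u)
    (hφ : ∀ u, 0 ≤ u → φ u ≤ A * exp (-β * u) + B * exp (-β₁ * u)) {x : ℝ} (hx : 0 ≤ x) :
    ∫ y in Ioi 0, φ (x + y) * (r * exp (-r * x)) * (r * exp (-r * y)) ≤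
      (A * (r / (β + r)) * exp (-β * x) + B * (r / (β₁ + r)) * exp (-β₁ * x)) *
        (r * exp (-r * x)) := by
  have hshift : ∀ u, 0 ≤ u → φ (x + u) ≤
      A * exp (-β * x) * exp (-β * u) + B * exp (-β₁ * x) * exp (-β₁ * u) := fun u hu => by
    simpa only [mul_add, exp_add, mul_assoc] using hφ (x + u) (by linarith)
  have htail := setIntegral_Ioi_mul_expDensity_le hr hβ hβ₁ le_rfl
    (fun u hu => hφ₀ (x + u) (by linarith)) hshift
  simp only [mul_zero, exp_zero, mul_one] at htail
  calc ∫ y in Ioi 0, φ (x + y) * (r * exp (-r * x)) * (r * exp (-r * y))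
      = (∫ y in Ioi 0, φ (x + y) * (r * exp (-r * y))) * (r * exp (-r * x)) := by
        rw [← integral_mul_const]
        simp only [mul_right_comm]
    _ ≤ _ := by
        refine mul_le_mul_of_nonneg_right (htail.trans_eq ?_) (by positivity)
        ring

theorem setIntegral_Ioc_setIntegral_Ioi_mul_expDensity_le (hr : 0 ≤ r) (hβ : 0 < β + r)
    (hβ₁ : 0 < β₁ + r) {τ : ℝ} (hτ : 0 ≤ τ) (hφ₀ : ∀ u, 0 ≤ u → 0 ≤ φ u)
    (hφ : ∀ u, 0 ≤ u → φ u ≤ A * exp (-β * u) + B * exp (-β₁ * u)) :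
    ∫ x in Ioc 0 τ, ∫ y in Ioi 0, φ (x + y) * (r * exp (-r * x)) * (r * exp (-r * y)) ≤
      A * (r / (β + r)) ^ 2 * (1 - exp (-(β + r) * τ)) +
        B * (r / (β₁ + r)) ^ 2 * (1 - exp (-(β₁ + r) * τ)) := by
  calc ∫ x in Ioc 0 τ, ∫ y in Ioi 0, φ (x + y) * (r * exp (-r * x)) * (r * exp (-r * y))
      ≤ ∫ x in Ioc 0 τ, (A * (r / (β + r)) * exp (-β * x) +
          B * (r / (β₁ + r)) * exp (-β₁ * x)) * (r * exp (-r * x)) := by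
        refine setIntegral_mono_of_nonneg (fun x hx => ?_) (fun x hx => ?_)
          ((integrableOn_expMix_mul_expDensity hβ hβ₁ 0).mono_set Ioc_subset_Ioi_self)
        · refine setIntegral_nonneg measurableSet_Ioi fun y hy => ?_
          have := hφ₀ (x + y) (by linarith [hx.1, mem_Ioi.1 hy])
          positivity
        · exact setIntegral_Ioi_add_mul_expDensity_le hr hβ hβ₁ hφ₀ hφ hx.1.le
    _ = _ := by
        rw [setIntegral_expMix_mul_expDensity hβ hβ₁ Ioc_subset_Ioi_self,
          integral_exp_neg_mul_Ioc hβ hτ, integral_exp_neg_mul_Ioc hβ₁ hτ]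
        ring

end ExponentialMixture

theorem gaussianTail_sqrt_le {Q : ℝ → ℝ}
    (hQ : ∀ x, 0 ≤ x → Q x ≤ (1/12) * exp (-x^2 / 2) + (1/4) * exp (-2 * x^2 / 3))
    {g N₀ u : ℝ} (hgN : 0 ≤ g / N₀) (hu : 0 ≤ u) :
    Q (√(g * u / N₀)) ≤
      1/12 * exp (-(g / (2 * N₀)) * u) + 1/4 * exp (-(4 * g / 3 / (2 * N₀)) * u) := by
  have hx : 0 ≤ g * u / N₀ := by rw [mul_div_right_comm]; positivity
  convert hQ _ (sqrt_nonneg _) using 3 <;> rw [sq_sqrt hx] <;> ring_nf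

theorem sq_sqrt_div_div_eq {σ g N₀ : ℝ} (hσ : σ ≠ 0) (hg : 0 ≤ g) (hN : 0 < N₀) :
    (√(σ^2 * N₀ / (g * σ^2 + N₀)) / σ)^2 = 1 / (2 * σ^2) / (g / (2 * N₀) + 1 / (2 * σ^2)) := by
  rw [div_pow, sq_sqrt (by positivity)]
  field_simp

theorem neg_div_two_mul_sq_sqrt {σ g N₀ : ℝ} (τ : ℝ) (hσ : σ ≠ 0) (hg : 0 ≤ g) (hN : 0 < N₀) :
    -τ / (2 * √(σ^2 * N₀ / (g * σ^2 + N₀))^2) = -(g / (2 * N₀) + 1 / (2 * σ^2)) * τ := by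
  rw [sq_sqrt (by positivity)]
  field_simp

theorem ccsr_round1_ber_bound_general (σ c g N₀ τ : ℝ) (hσ : 0 < σ) (hc : 0 < c) (hg : 0 < g)
    (hN : 0 < N₀) (hτ : 0 ≤ τ)
    (Q : ℝ → ℝ) (hQnonneg : ∀ x, 0 ≤ Q x)
    (hQbound : ∀ x, 0 ≤ x → Q x ≤ (1/12) * Real.exp (-x^2 / 2) + (1/4) * Real.exp (-2 * x^2 / 3))
    (g₁ ρ ρ₁ : ℝ) (hg₁ : g₁ = 4 * g / 3)
    (hρ : ρ = Real.sqrt (σ^2 * N₀ / (g * σ^2 + N₀)))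
    (hρ₁ : ρ₁ = Real.sqrt (σ^2 * N₀ / (g₁ * σ^2 + N₀))) :
    c * ((∫ x in Set.Ioi τ,
            Q (Real.sqrt (g * x / N₀)) * ((1 / (2 * σ^2)) * Real.exp (-x / (2 * σ^2))))
        + ∫ x in Set.Ioc (0:ℝ) τ, ∫ y in Set.Ioi (0:ℝ),
            Q (Real.sqrt (g * (x + y) / N₀))
              * ((1 / (2 * σ^2)) * Real.exp (-x / (2 * σ^2)))
              * ((1 / (2 * σ^2)) * Real.exp (-y / (2 * σ^2))))
      ≤ (c/12) * (ρ/σ)^2 * Real.exp (-τ / (2 * ρ^2))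
        + (c/4) * (ρ₁/σ)^2 * Real.exp (-τ / (2 * ρ₁^2))
        + (c/12) * (ρ/σ)^4 * (1 - Real.exp (-τ / (2 * ρ^2)))
        + (c/4) * (ρ₁/σ)^4 * (1 - Real.exp (-τ / (2 * ρ₁^2))) := by
  subst hg₁ hρ hρ₁
  have hdensity : ∀ x, 1 / (2 * σ^2) * exp (-x / (2 * σ^2)) =
      1 / (2 * σ^2) * exp (-(1 / (2 * σ^2)) * x) := fun x => by ring_nf
  simp only [hdensity]
  have hr : 0 ≤ 1 / (2 * σ^2) := by positivity
  have hβ : 0 < g / (2 * N₀) + 1 / (2 * σ^2) := by positivity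
  have hβ₁ : 0 < 4 * g / 3 / (2 * N₀) + 1 / (2 * σ^2) := by positivity
  have hφ₀ : ∀ u, 0 ≤ u → 0 ≤ Q (√(g * u / N₀)) := fun u _ => hQnonneg _
  have hφ := fun u (hu : 0 ≤ u) =>
    gaussianTail_sqrt_le hQbound (g := g) (N₀ := N₀) (div_nonneg hg.le hN.le) hu
  have htail := setIntegral_Ioi_mul_expDensity_le hr hβ hβ₁ hτ hφ₀ hφ
  have hdouble := setIntegral_Ioc_setIntegral_Ioi_mul_expDensity_le hr hβ hβ₁ hτ hφ₀ hφ
  refine (mul_le_mul_of_nonneg_left (add_le_add htail hdouble) hc.le).trans_eq ?_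
  simp only [show ∀ x : ℝ, x ^ 4 = (x ^ 2) ^ 2 from fun x => by ring]
  rw [sq_sqrt_div_div_eq hσ.ne' hg.le hN, sq_sqrt_div_div_eq hσ.ne' (by positivity) hN,
    neg_div_two_mul_sq_sqrt τ hσ.ne' hg.le hN, neg_div_two_mul_sq_sqrt τ hσ.ne' (by positivity) hN]
  ring

/-- Round-1 CCSR BER upper bound: with `χ₁, χ₂` i.i.d. exponential of density
`(1/(2σ²)) e^{-x/(2σ²)}`, the BER
`P_{e1} = c·E[1{χ₁≥τ} Q(√(gχ₁/N₀)) + 1{χ₁<τ} Q(√(g(χ₁+χ₂)/N₀))]` satisfies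
`P_{e1} ≤ (c/12)(ρ/σ)² e^{-τ/(2ρ²)} + (c/4)(ρ₁/σ)² e^{-τ/(2ρ₁²)}
        + (c/12)(ρ/σ)⁴(1 - e^{-τ/(2ρ²)}) + (c/4)(ρ₁/σ)⁴(1 - e^{-τ/(2ρ₁²)})`. -/
theorem ccsr_round1_ber_bound (σ c g N₀ τ : ℝ) (hσ : 0 < σ) (hc : 0 < c) (hg : 0 < g)
    (hN : 0 < N₀) (hτ : 0 ≤ τ)
    (Q : ℝ → ℝ) (hQmeas : Measurable Q) (hQnonneg : ∀ x, 0 ≤ Q x)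
    (hQbound : ∀ x, 0 ≤ x → Q x ≤ (1/12) * Real.exp (-x^2 / 2) + (1/4) * Real.exp (-2 * x^2 / 3))
    (g₁ ρ ρ₁ : ℝ) (hg₁ : g₁ = 4 * g / 3)
    (hρ : ρ = Real.sqrt (σ^2 * N₀ / (g * σ^2 + N₀)))
    (hρ₁ : ρ₁ = Real.sqrt (σ^2 * N₀ / (g₁ * σ^2 + N₀))) :
    c * ((∫ x in Set.Ioi τ,
            Q (Real.sqrt (g * x / N₀)) * ((1 / (2 * σ^2)) * Real.exp (-x / (2 * σ^2))))
        + ∫ x in Set.Ioc (0:ℝ) τ, ∫ y in Set.Ioi (0:ℝ),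
            Q (Real.sqrt (g * (x + y) / N₀))
              * ((1 / (2 * σ^2)) * Real.exp (-x / (2 * σ^2)))
              * ((1 / (2 * σ^2)) * Real.exp (-y / (2 * σ^2))))
      ≤ (c/12) * (ρ/σ)^2 * Real.exp (-τ / (2 * ρ^2))
        + (c/4) * (ρ₁/σ)^2 * Real.exp (-τ / (2 * ρ₁^2))
        + (c/12) * (ρ/σ)^4 * (1 - Real.exp (-τ / (2 * ρ^2)))
        + (c/4) * (ρ₁/σ)^4 * (1 - Real.exp (-τ / (2 * ρ₁^2))) :=
  ccsr_round1_ber_bound_general σ c g N₀ τ hσ hc hg hN hτ Q hQnonneg hQbound g₁ ρ ρ₁ hg₁ hρ hρ₁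
end

section
/- The BER of joint detection in round J of the CCSR scheme satisfies the upper bound P_{eJ} ≤ Σ_{i=0}^{J} C(J,i) [ (c/12)(ρ/σ)^{2(J+i)} (e^{-τ/(2ρ²)})^{J-i} (1-e^{-τ/(2ρ²)})^{i} + (c/4)(ρ₁/σ)^{2(J+i)} (e^{-τ/(2ρ₁²)})^{J-i} (1-e^{-τ/(2ρ₁²)})^{i} ], where P_{eJ} is the expectation of c·Q applied to the combined SNR of the joint channel vectors over i.i.d. exponential channel gains. -/
/-!
Bounding `Q` reduces the BER to two Laplace transforms `𝔼 e^{-aW}` of the joint gain `W`.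
The pairs `(Xⱼ, Yⱼ)` are i.i.d. with rate `r = 1 / (2σ²)`, so `𝔼 e^{-aW}` is the `J`-th power of
`𝔼 e^{-a(X + 𝟙{X < τ} Y)} = K²(1 - E) + K E`, where `K = r / (r + a) = (ρ / σ)²` and
`E = e^{-(r + a) τ} = e^{-τ / (2ρ²)}`; the binomial theorem then gives the stated sum.
-/

open MeasureTheory ProbabilityTheory Real Set

lemma ae_nonneg_expMeasure (r : ℝ) : ∀ᵐ x ∂expMeasure r, 0 ≤ x := by
  rw [ae_iff]
  simp only [not_le]
  change expMeasure r (Iio 0) = 0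
  rw [expMeasure, gammaMeasure, withDensity_apply _ measurableSet_Iio]
  exact lintegral_exponentialPDF_of_nonpos le_rfl

lemma integrable_exp_neg_mul_of_ae_nonneg {α : Type*} [MeasurableSpace α] {μ : Measure α}
    [IsFiniteMeasure μ] {f : α → ℝ} (hf : AEMeasurable f μ) (hf0 : ∀ᵐ x ∂μ, 0 ≤ f x)
    {a : ℝ} (ha : 0 ≤ a) : Integrable (fun x => exp (-(a * f x))) μ := by
  refine Integrable.mono' (integrable_const 1) (by fun_prop) ?_
  filter_upwards [hf0] with x hx
  rw [norm_of_nonneg (exp_nonneg _), exp_le_one_iff, neg_nonpos]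
  positivity

section ExpMeasure

variable {r a τ : ℝ}

lemma integrable_exp_neg_mul_expMeasure (hr : 0 < r) (ha : 0 ≤ a) :
    Integrable (fun x => exp (-(a * x))) (expMeasure r) :=
  have := isProbabilityMeasure_expMeasure hr
  integrable_exp_neg_mul_of_ae_nonneg aemeasurable_id (ae_nonneg_expMeasure r) ha

lemma setIntegral_Ici_exp_neg_mul_expMeasure (hr : 0 < r) (ha : 0 ≤ a) (hτ : 0 ≤ τ) :
    ∫ x in Ici τ, exp (-(a * x)) ∂expMeasure r = r / (r + a) * exp (-((r + a) * τ)) := by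
  have hra : 0 < r + a := by positivity
  change ∫ x in Ici τ, _ ∂(volume.withDensity fun x => ENNReal.ofReal (gammaPDFReal 1 r x)) = _
  rw [setIntegral_withDensity_eq_setIntegral_toReal_smul
      (measurable_gammaPDFReal 1 r).ennreal_ofReal (by simp) _ measurableSet_Ici,
    integral_Ici_eq_integral_Ioi]
  have hpdf : ∀ x ∈ Ioi τ, (ENNReal.ofReal (gammaPDFReal 1 r x)).toReal • exp (-(a * x))
      = r * exp (-(r + a) * x) := by
    intro x hx
    rw [ENNReal.toReal_ofReal (gammaPDFReal_nonneg zero_lt_one hr x), smul_eq_mul,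
      gammaPDFReal, if_pos (hτ.trans hx.le)]
    simp only [rpow_one, Gamma_one, div_one, sub_self, rpow_zero, mul_one]
    rw [mul_assoc, ← exp_add]
    ring_nf
  rw [setIntegral_congr_fun measurableSet_Ioi hpdf, integral_const_mul,
    integral_exp_mul_Ioi (by linarith)]
  field_simp

lemma integral_exp_neg_mul_expMeasure (hr : 0 < r) (ha : 0 ≤ a) :
    ∫ x, exp (-(a * x)) ∂expMeasure r = r / (r + a) := by
  have h := setIntegral_Ici_exp_neg_mul_expMeasure hr ha le_rfl
  rwa [mul_zero, neg_zero, exp_zero, mul_one,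
    setIntegral_eq_integral_of_ae_compl_eq_zero] at h
  filter_upwards [ae_nonneg_expMeasure r] with x hx hxc
  exact absurd hx hxc

lemma setIntegral_Iio_exp_neg_mul_expMeasure (hr : 0 < r) (ha : 0 ≤ a) (hτ : 0 ≤ τ) :
    ∫ x in Iio τ, exp (-(a * x)) ∂expMeasure r = r / (r + a) * (1 - exp (-((r + a) * τ))) := by
  have h := integral_add_compl measurableSet_Ici (integrable_exp_neg_mul_expMeasure hr ha)
    (μ := expMeasure r) (s := Ici τ)
  rw [compl_Ici, setIntegral_Ici_exp_neg_mul_expMeasure hr ha hτ,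
    integral_exp_neg_mul_expMeasure hr ha] at h
  linarith

lemma integral_exp_neg_mul_retransmission_expMeasure (hr : 0 < r) (ha : 0 ≤ a) (hτ : 0 ≤ τ) :
    ∫ p, exp (-(a * (p.1 + if p.1 < τ then p.2 else 0))) ∂(expMeasure r).prod (expMeasure r)
      = (r / (r + a)) ^ 2 * (1 - exp (-((r + a) * τ))) + r / (r + a) * exp (-((r + a) * τ)) := by
  have := isProbabilityMeasure_expMeasure hr
  set f : ℝ → ℝ := fun x => exp (-(a * x))
  have hf := integrable_exp_neg_mul_expMeasure hr ha
  have hsplit : ∀ p : ℝ × ℝ, exp (-(a * (p.1 + if p.1 < τ then p.2 else 0)))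
      = (Iio τ).indicator f p.1 * f p.2 + (Ici τ).indicator f p.1 := by
    rintro ⟨x, y⟩
    by_cases hx : x < τ
    · simp [f, hx, ← exp_add, mul_add, add_comm]
    · simp [f, hx, not_lt.mp hx]
  simp_rw [hsplit]
  rw [integral_add ((hf.indicator measurableSet_Iio).mul_prod hf)
      ((hf.indicator measurableSet_Ici).comp_fst _), integral_prod_mul ((Iio τ).indicator f) f,
    integral_fun_fst, integral_indicator measurableSet_Iio, integral_indicator measurableSet_Ici,
    setIntegral_Iio_exp_neg_mul_expMeasure hr ha hτ, integral_exp_neg_mul_expMeasure hr ha,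
    setIntegral_Ici_exp_neg_mul_expMeasure hr ha hτ, probReal_univ, one_smul]
  ring

end ExpMeasure

theorem integral_pi_sum_prod_pairs {ι α : Type*} [Fintype ι] [MeasurableSpace α]
    (μ : ι ⊕ ι → Measure α) [∀ k, SigmaFinite (μ k)] (f : ι → α × α → ℝ) :
    ∫ x, ∏ j, f j (x (.inl j), x (.inr j)) ∂Measure.pi μ
      = ∏ j, ∫ p, f j p ∂(μ (.inl j)).prod (μ (.inr j)) := by
  let e := (MeasurableEquiv.arrowProdEquivProdArrow α α ι).trans
    (MeasurableEquiv.sumPiEquivProdPi fun _ => α).symm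
  have he : MeasurePreserving e (Measure.pi fun j => (μ (.inl j)).prod (μ (.inr j)))
      (Measure.pi μ) :=
    (measurePreserving_sumPiEquivProdPi_symm μ).comp
      (measurePreserving_arrowProdEquivProdArrow α α ι _ _)
  rw [← integral_fintype_prod_eq_prod, ← he.integral_comp']
  rfl

lemma sq_mul_add_mul_pow_eq_sum (K E : ℝ) (n : ℕ) :
    (K ^ 2 * (1 - E) + K * E) ^ n
      = ∑ i ∈ Finset.range (n + 1),
          (n.choose i : ℝ) * (K ^ (n + i) * E ^ (n - i) * (1 - E) ^ i) := by
  rw [add_pow]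
  refine Finset.sum_congr rfl fun i hi => ?_
  have hin : i ≤ n := Nat.lt_succ_iff.mp (Finset.mem_range.mp hi)
  rw [show n + i = 2 * i + (n - i) by omega, pow_add, pow_mul, mul_pow, mul_pow]
  ring

lemma div_sq_eq_rate_ratio {σ N₀ b ρ τ : ℝ} (hσ : 0 < σ) (hN : 0 < N₀) (hb : 0 ≤ b)
    (hρ : ρ = √(σ ^ 2 * N₀ / (b * σ ^ 2 + N₀))) :
    (ρ / σ) ^ 2 = 1 / (2 * σ ^ 2) / (1 / (2 * σ ^ 2) + b / (2 * N₀))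
      ∧ -τ / (2 * ρ ^ 2) = -((1 / (2 * σ ^ 2) + b / (2 * N₀)) * τ) := by
  have hρ2 : ρ ^ 2 = σ ^ 2 * N₀ / (b * σ ^ 2 + N₀) := by
    rw [hρ, sq_sqrt (by positivity)]
  constructor
  · rw [div_pow, hρ2]
    field_simp
    ring
  · rw [hρ2]
    field_simp
    ring

section JointGain

variable {ι : Type*} [Fintype ι]

/-- `z (.inl j)` is the gain of the `j`-th full transmission and `z (.inr j)` that of its
selective retransmission, which only takes place when `z (.inl j) < τ`. -/
noncomputable def jointGain (τ : ℝ) (z : ι ⊕ ι → ℝ) : ℝ :=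
  ∑ j, z (.inl j) + ∑ j ∈ Finset.univ.filter (fun j => z (.inl j) < τ), z (.inr j)

lemma jointGain_eq_sum (τ : ℝ) (z : ι ⊕ ι → ℝ) :
    jointGain τ z = ∑ j, (z (.inl j) + if z (.inl j) < τ then z (.inr j) else 0) := by
  rw [jointGain, Finset.sum_filter, Finset.sum_add_distrib]

lemma measurable_jointGain (τ : ℝ) : Measurable (jointGain (ι := ι) τ) := by
  simp_rw [funext (jointGain_eq_sum τ)]
  refine Finset.measurable_sum _ fun j _ => (measurable_pi_apply _).add ?_
  exact Measurable.ite (measurableSet_lt (measurable_pi_apply _) measurable_const)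
    (measurable_pi_apply _) measurable_const

lemma jointGain_nonneg (τ : ℝ) {z : ι ⊕ ι → ℝ} (hz : ∀ k, 0 ≤ z k) : 0 ≤ jointGain τ z :=
  add_nonneg (Finset.sum_nonneg fun _ _ => hz _) (Finset.sum_nonneg fun _ _ => hz _)

lemma exp_neg_mul_jointGain (a τ : ℝ) (z : ι ⊕ ι → ℝ) :
    exp (-(a * jointGain τ z))
      = ∏ j, exp (-(a * (z (.inl j) + if z (.inl j) < τ then z (.inr j) else 0))) := by
  rw [jointGain_eq_sum, Finset.mul_sum, ← Finset.sum_neg_distrib, exp_sum]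

variable {Ω : Type*} [MeasurableSpace Ω] {P : Measure Ω} {Z : ι ⊕ ι → Ω → ℝ}

/-- Under the joint law `Measure.pi`, the pairs `(z (.inl j), z (.inr j))` are independent, so the
Laplace transform factorises over `j`. -/
theorem integral_exp_neg_mul_jointGain (hZ : ∀ k, Measurable (Z k)) (hindep : iIndepFun Z P)
    {r a τ : ℝ} (hr : 0 < r) (hlaw : ∀ k, P.map (Z k) = expMeasure r) (ha : 0 ≤ a)
    (hτ : 0 ≤ τ) :
    ∫ ω, exp (-(a * jointGain τ (fun k => Z k ω))) ∂P
      = ((r / (r + a)) ^ 2 * (1 - exp (-((r + a) * τ))) + r / (r + a) * exp (-((r + a) * τ)))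
          ^ Fintype.card ι := by
  have := isProbabilityMeasure_expMeasure hr
  have hjoint : P.map (fun ω k => Z k ω) = Measure.pi fun _ => expMeasure r := by
    simp_rw [hindep.map_fun_eq_pi_map (fun k => (hZ k).aemeasurable), hlaw]
  have hmeas : Measurable fun z : ι ⊕ ι → ℝ => exp (-(a * jointGain τ z)) := by
    have := measurable_jointGain (ι := ι) τ
    fun_prop
  rw [← integral_map (measurable_pi_lambda _ hZ).aemeasurable hmeas.aestronglyMeasurable, hjoint]
  simp_rw [exp_neg_mul_jointGain]
  rw [integral_pi_sum_prod_pairs (fun _ => expMeasure r)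
    (fun _ p => exp (-(a * (p.1 + if p.1 < τ then p.2 else 0))))]
  simp [integral_exp_neg_mul_retransmission_expMeasure hr ha hτ]

theorem integral_exp_neg_mul_jointGain_eq_sum (hZ : ∀ k, Measurable (Z k))
    (hindep : iIndepFun Z P) {σ N₀ b ρ τ : ℝ} (hσ : 0 < σ) (hN : 0 < N₀) (hb : 0 ≤ b)
    (hτ : 0 ≤ τ) (hlaw : ∀ k, P.map (Z k) = expMeasure (1 / (2 * σ ^ 2)))
    (hρ : ρ = √(σ ^ 2 * N₀ / (b * σ ^ 2 + N₀))) :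
    ∫ ω, exp (-(b / (2 * N₀) * jointGain τ (fun k => Z k ω))) ∂P
      = ∑ i ∈ Finset.range (Fintype.card ι + 1), ((Fintype.card ι).choose i : ℝ) *
          ((ρ / σ) ^ (2 * (Fintype.card ι + i)) * exp (-τ / (2 * ρ ^ 2)) ^ (Fintype.card ι - i)
            * (1 - exp (-τ / (2 * ρ ^ 2))) ^ i) := by
  obtain ⟨hK, hE⟩ := div_sq_eq_rate_ratio (τ := τ) hσ hN hb hρ
  rw [integral_exp_neg_mul_jointGain hZ hindep (by positivity) hlaw (by positivity) hτ,
    sq_mul_add_mul_pow_eq_sum, hE]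
  simp_rw [pow_mul, hK]

end JointGain

theorem ccsr_roundJ_ber_bound_general
    {Ω : Type*} [MeasurableSpace Ω] (P : Measure Ω) [IsProbabilityMeasure P]
    (σ c g N₀ τ : ℝ) (hσ : 0 < σ) (hc : 0 < c) (hg : 0 < g) (hN : 0 < N₀) (hτ : 0 ≤ τ)
    (J : ℕ)
    (Z : (Fin J ⊕ Fin J) → Ω → ℝ) (hZmeas : ∀ k, Measurable (Z k))
    (hindep : iIndepFun Z P)
    (hdist : ∀ k, Measure.map (Z k) P = expMeasure (1 / (2 * σ^2)))
    (Q : ℝ → ℝ) (hQnonneg : ∀ x, 0 ≤ Q x)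
    (hQbound : ∀ x, 0 ≤ x → Q x ≤ (1/12) * Real.exp (-x^2 / 2) + (1/4) * Real.exp (-2 * x^2 / 3))
    (ρ ρ₁ : ℝ)
    (hρ : ρ = Real.sqrt (σ^2 * N₀ / (g * σ^2 + N₀)))
    (hρ₁ : ρ₁ = Real.sqrt (σ^2 * N₀ / ((4 * g / 3) * σ^2 + N₀))) :
    (∫ ω, c * Q (Real.sqrt (g * ((∑ j : Fin J, Z (Sum.inl j) ω)
          + ∑ j ∈ Finset.univ.filter (fun j : Fin J => Z (Sum.inl j) ω < τ),
              Z (Sum.inr j) ω) / N₀)) ∂P)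
      ≤ ∑ i ∈ Finset.range (J + 1), (J.choose i : ℝ) *
          ((c/12) * (ρ/σ) ^ (2 * (J + i)) * (Real.exp (-τ / (2 * ρ^2))) ^ (J - i)
              * (1 - Real.exp (-τ / (2 * ρ^2))) ^ i
            + (c/4) * (ρ₁/σ) ^ (2 * (J + i)) * (Real.exp (-τ / (2 * ρ₁^2))) ^ (J - i)
              * (1 - Real.exp (-τ / (2 * ρ₁^2))) ^ i) := by
  have hW : ∀ᵐ ω ∂P, 0 ≤ jointGain τ (Z · ω) := by
    have hZ : ∀ k, ∀ᵐ ω ∂P, 0 ≤ Z k ω := fun k =>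
      ae_of_ae_map (hZmeas k).aemeasurable (hdist k ▸ ae_nonneg_expMeasure _)
    filter_upwards [ae_all_iff.2 hZ] with ω hω using jointGain_nonneg τ hω
  have hint : ∀ a, 0 ≤ a → Integrable (fun ω => exp (-(a * jointGain τ (Z · ω)))) P :=
    fun a ha => integrable_exp_neg_mul_of_ae_nonneg
      ((measurable_jointGain τ).comp (measurable_pi_lambda _ hZmeas)).aemeasurable hW ha
  have ha₁ : 0 ≤ g / (2 * N₀) := by positivity
  have ha₂ : 0 ≤ 4 * g / 3 / (2 * N₀) := by positivity
  calc ∫ ω, c * Q (√(g * jointGain τ (Z · ω) / N₀)) ∂P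
      ≤ ∫ ω, (c / 12 * exp (-(g / (2 * N₀) * jointGain τ (Z · ω)))
          + c / 4 * exp (-(4 * g / 3 / (2 * N₀) * jointGain τ (Z · ω)))) ∂P := by
        refine integral_mono_of_nonneg (.of_forall fun ω => mul_nonneg hc.le (hQnonneg _))
          (((hint _ ha₁).const_mul _).add ((hint _ ha₂).const_mul _)) ?_
        filter_upwards [hW] with ω hω
        have hQ := hQbound _ (sqrt_nonneg (g * jointGain τ (Z · ω) / N₀))
        rw [sq_sqrt (by positivity)] at hQ
        calc _ ≤ c * (1 / 12 * exp (-(g * jointGain τ (Z · ω) / N₀) / 2)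
              + 1 / 4 * exp (-2 * (g * jointGain τ (Z · ω) / N₀) / 3)) :=
              mul_le_mul_of_nonneg_left hQ hc.le
          _ = _ := by ring_nf
    _ = c / 12 * ∫ ω, exp (-(g / (2 * N₀) * jointGain τ (Z · ω))) ∂P
          + c / 4 * ∫ ω, exp (-(4 * g / 3 / (2 * N₀) * jointGain τ (Z · ω))) ∂P := by
        rw [integral_add ((hint _ ha₁).const_mul _) ((hint _ ha₂).const_mul _),
          integral_const_mul, integral_const_mul]
    _ = _ := by
        rw [integral_exp_neg_mul_jointGain_eq_sum hZmeas hindep hσ hN hg.le hτ hdist hρ,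
          integral_exp_neg_mul_jointGain_eq_sum hZmeas hindep hσ hN (by positivity) hτ hdist hρ₁,
          Fintype.card_fin, Finset.mul_sum, Finset.mul_sum, ← Finset.sum_add_distrib]
        exact Finset.sum_congr rfl fun i _ => by ring

/-- Round-`J` CCSR BER upper bound. The full-transmission gains `X j` and the
selective-retransmission gains `Y j` are jointly i.i.d. exponential with rate
`1/(2σ²)` (i.e. density `(1/(2σ²)) e^{-x/(2σ²)}`). The BER of joint detection,
`P_{eJ} = E[c · Q(√(g·(∑ⱼ X j + ∑_{j : X j < τ} Y j)/N₀))]`, is bounded by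
`∑_{i=0}^{J} C(J,i) [(c/12)(ρ/σ)^{2(J+i)} (e^{-τ/(2ρ²)})^{J-i} (1-e^{-τ/(2ρ²)})^{i}
 + (c/4)(ρ₁/σ)^{2(J+i)} (e^{-τ/(2ρ₁²)})^{J-i} (1-e^{-τ/(2ρ₁²)})^{i}]`. -/
theorem ccsr_roundJ_ber_bound
    {Ω : Type*} [MeasurableSpace Ω] (P : Measure Ω) [IsProbabilityMeasure P]
    (σ c g N₀ τ : ℝ) (hσ : 0 < σ) (hc : 0 < c) (hg : 0 < g) (hN : 0 < N₀) (hτ : 0 ≤ τ)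
    (J : ℕ) (hJ : 1 ≤ J)
    (Z : (Fin J ⊕ Fin J) → Ω → ℝ) (hZmeas : ∀ k, Measurable (Z k))
    (hindep : iIndepFun Z P)
    (hdist : ∀ k, Measure.map (Z k) P = expMeasure (1 / (2 * σ^2)))
    (Q : ℝ → ℝ) (hQmeas : Measurable Q) (hQnonneg : ∀ x, 0 ≤ Q x)
    (hQbound : ∀ x, 0 ≤ x → Q x ≤ (1/12) * Real.exp (-x^2 / 2) + (1/4) * Real.exp (-2 * x^2 / 3))
    (ρ ρ₁ : ℝ)
    (hρ : ρ = Real.sqrt (σ^2 * N₀ / (g * σ^2 + N₀)))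
    (hρ₁ : ρ₁ = Real.sqrt (σ^2 * N₀ / ((4 * g / 3) * σ^2 + N₀))) :
    (∫ ω, c * Q (Real.sqrt (g * ((∑ j : Fin J, Z (Sum.inl j) ω)
          + ∑ j ∈ Finset.univ.filter (fun j : Fin J => Z (Sum.inl j) ω < τ),
              Z (Sum.inr j) ω) / N₀)) ∂P)
      ≤ ∑ i ∈ Finset.range (J + 1), (J.choose i : ℝ) *
          ((c/12) * (ρ/σ) ^ (2 * (J + i)) * (Real.exp (-τ / (2 * ρ^2))) ^ (J - i)
              * (1 - Real.exp (-τ / (2 * ρ^2))) ^ i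
            + (c/4) * (ρ₁/σ) ^ (2 * (J + i)) * (Real.exp (-τ / (2 * ρ₁^2))) ^ (J - i)
              * (1 - Real.exp (-τ / (2 * ρ₁^2))) ^ i) :=
  ccsr_roundJ_ber_bound_general P σ c g N₀ τ hσ hc hg hN hτ J Z hZmeas hindep hdist Q hQnonneg
    hQbound ρ ρ₁ hρ hρ₁
end
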